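/- For every natural number k ≥ 1 and reals c, t with ct > 0, (2(2k)!/(k!(k−1)!))·∫₀^{ct} β·(c²t²−β²)^{k−1}(ct−β)/(2ct)^{2k} dβ = ct·C(2k,k)/2^{2k} − ct/(2k+1). -/

import Mathlib

/-!
Write `a = c t` and `n = k - 1`. Since `β (a - β) = a β - β²`, the integral splits into
`a ∫ β (a² - β²)ⁿ`, which is elementary, and `∫ β² (a² - β²)ⁿ`. Differentiating
`β (a² - β²)ⁿ⁺¹` shows `(2n + 3) ∫ β² (a² - β²)ⁿ = a² Fₙ` with `Fₙ = ∫₀^a (a² - β²)ⁿ`, and hence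
the Wallis-type recursion `(2n + 3) Fₙ₊₁ = (2n + 2) a² Fₙ`, so `Fₙ = a^(2n+1) 4ⁿ (n!)² / (2n+1)!`.
-/

open intervalIntegral Nat

section SqSubSqPow

variable (a : ℝ) (n : ℕ)

lemma hasDerivAt_sq_sub_sq_pow_succ (x : ℝ) :
    HasDerivAt (fun y : ℝ => (a ^ 2 - y ^ 2) ^ (n + 1))
      (-(2 * (n + 1)) * (x * (a ^ 2 - x ^ 2) ^ n)) x := by
  refine (((hasDerivAt_pow 2 x).const_sub (a ^ 2)).fun_pow (n + 1)).congr_deriv ?_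
  push_cast
  ring

lemma hasDerivAt_mul_sq_sub_sq_pow_succ (x : ℝ) :
    HasDerivAt (fun y : ℝ => y * (a ^ 2 - y ^ 2) ^ (n + 1))
      ((a ^ 2 - (2 * n + 3) * x ^ 2) * (a ^ 2 - x ^ 2) ^ n) x := by
  refine ((hasDerivAt_id x).fun_mul (hasDerivAt_sq_sub_sq_pow_succ a n x)).congr_deriv ?_
  simp only [id_eq]
  ring

lemma integral_mul_sq_sub_sq_pow :
    ∫ x in (0 : ℝ)..a, x * (a ^ 2 - x ^ 2) ^ n = a ^ (2 * n + 2) / (2 * (n + 1)) := by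
  have hderiv (x : ℝ) : HasDerivAt (fun y : ℝ => -(a ^ 2 - y ^ 2) ^ (n + 1) / (2 * (n + 1)))
      (x * (a ^ 2 - x ^ 2) ^ n) x := by
    refine ((hasDerivAt_sq_sub_sq_pow_succ a n x).neg.div_const
      (2 * ((n : ℝ) + 1))).congr_deriv ?_
    field_simp
  rw [integral_eq_sub_of_hasDerivAt (fun x _ => hderiv x)
    ((by fun_prop : Continuous _).intervalIntegrable _ _)]
  ring

lemma integral_sq_mul_sq_sub_sq_pow :
    (2 * n + 3) * ∫ x in (0 : ℝ)..a, x ^ 2 * (a ^ 2 - x ^ 2) ^ n =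
      a ^ 2 * ∫ x in (0 : ℝ)..a, (a ^ 2 - x ^ 2) ^ n := by
  have hzero : ∫ x in (0 : ℝ)..a, (a ^ 2 - (2 * n + 3) * x ^ 2) * (a ^ 2 - x ^ 2) ^ n = 0 := by
    rw [integral_eq_sub_of_hasDerivAt (fun x _ => hasDerivAt_mul_sq_sub_sq_pow_succ a n x)
      ((by fun_prop : Continuous _).intervalIntegrable _ _)]
    ring
  simp only [sub_mul, mul_assoc] at hzero
  rw [integral_sub ((by fun_prop : Continuous _).intervalIntegrable _ _)
    ((by fun_prop : Continuous _).intervalIntegrable _ _), integral_const_mul,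
    integral_const_mul] at hzero
  linarith

lemma integral_sq_sub_sq_pow_succ :
    (2 * n + 3) * ∫ x in (0 : ℝ)..a, (a ^ 2 - x ^ 2) ^ (n + 1) =
      (2 * n + 2) * a ^ 2 * ∫ x in (0 : ℝ)..a, (a ^ 2 - x ^ 2) ^ n := by
  have hsplit : ∫ x in (0 : ℝ)..a, (a ^ 2 - x ^ 2) ^ (n + 1) =
      a ^ 2 * (∫ x in (0 : ℝ)..a, (a ^ 2 - x ^ 2) ^ n) -
        ∫ x in (0 : ℝ)..a, x ^ 2 * (a ^ 2 - x ^ 2) ^ n := by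
    rw [← integral_const_mul, ← integral_sub ((by fun_prop : Continuous _).intervalIntegrable _ _)
      ((by fun_prop : Continuous _).intervalIntegrable _ _)]
    congr 1 with x
    ring
  rw [hsplit]
  linear_combination -integral_sq_mul_sq_sub_sq_pow a n

lemma integral_sq_sub_sq_pow :
    ∫ x in (0 : ℝ)..a, (a ^ 2 - x ^ 2) ^ n =
      a ^ (2 * n + 1) * 4 ^ n * (n ! : ℝ) ^ 2 / (2 * n + 1)! := by
  induction n with
  | zero => simp
  | succ n ih =>
    have hrec := integral_sq_sub_sq_pow_succ a n
    rw [ih] at hrec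
    rw [eq_div_iff (by positivity), show 2 * (n + 1) + 1 = (2 * n + 1 + 1) + 1 by ring,
      Nat.factorial_succ (2 * n + 1 + 1), Nat.factorial_succ (2 * n + 1), Nat.factorial_succ n]
    field_simp at hrec
    push_cast
    linear_combination (2 * (n : ℝ) + 2) * hrec

end SqSubSqPow

theorem stmt_13 (k : ℕ) (hk : 1 ≤ k) (c t : ℝ) (h : 0 < c * t) :
    2 * (Nat.factorial (2 * k) : ℝ) /
        ((Nat.factorial k : ℝ) * (Nat.factorial (k - 1) : ℝ)) *
      ∫ β in (0:ℝ)..(c * t),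
        β * (c ^ 2 * t ^ 2 - β ^ 2) ^ (k - 1) * (c * t - β) / (2 * c * t) ^ (2 * k) =
      c * t * (Nat.choose (2 * k) k : ℝ) / 2 ^ (2 * k) - c * t / (2 * k + 1) := by
  obtain ⟨n, rfl⟩ : ∃ n, k = n + 1 := ⟨k - 1, by omega⟩
  set a := c * t with ha
  have hintegrand (β : ℝ) :
      β * (c ^ 2 * t ^ 2 - β ^ 2) ^ (n + 1 - 1) * (a - β) / (2 * c * t) ^ (2 * (n + 1)) =
        (a * (β * (a ^ 2 - β ^ 2) ^ n) - β ^ 2 * (a ^ 2 - β ^ 2) ^ n) / (2 * a) ^ (2 * (n + 1)) := by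
    simp only [ha, Nat.add_sub_cancel]
    ring
  have hmoment := integral_sq_mul_sq_sub_sq_pow a n
  rw [integral_sq_sub_sq_pow] at hmoment
  simp only [hintegrand]
  rw [integral_div, integral_sub ((by fun_prop : Continuous _).intervalIntegrable _ _)
    ((by fun_prop : Continuous _).intervalIntegrable _ _), integral_const_mul,
    integral_mul_sq_sub_sq_pow, Nat.cast_choose ℝ (by omega : n + 1 ≤ 2 * (n + 1)),
    show 2 * (n + 1) - (n + 1) = n + 1 by omega, Nat.add_sub_cancel,
    show 2 * (n + 1) = 2 * n + 1 + 1 by ring, Nat.factorial_succ (2 * n + 1), Nat.factorial_succ n]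
  have ha0 : a ≠ 0 := h.ne'
  field_simp at hmoment ⊢
  rw [show (4 : ℝ) ^ n = 2 ^ (2 * n) by rw [pow_mul]; norm_num] at hmoment
  push_cast
  linear_combination -(2 * (n : ℝ) + 2) * ((n + 1) * n !) * (2 * (n + 1)) * 2 ^ (2 * n + 2) * hmoment
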